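/- Let φ : ℤ → ℝ/ℤ be a linear phase, φ(n) = αn + β. Then for every ε > 0 there is κ > 0 such that any finite arithmetic progression P ⊆ ℤ with |P| sufficiently large can be partitioned into arithmetic progressions P_1, …, P_m, each of size at least |P|^κ, such that for every i and all n, n' ∈ P_i one has ‖φ(n) − φ(n')‖_{ℝ/ℤ} ≤ ε. -/

import Mathlib

/-
Let `d` be the common difference of `P` and `N ≥ 1`. By Dirichlet's theorem some `1 ≤ q ≤ N` has
`‖q α d‖ ≤ 1/(N+1)`. Splitting `P` into its `q` classes of indices mod `q`, and cutting each class
into runs of `m` to `2m` consecutive terms, gives progressions of common difference `q d` along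
which the phase moves by at most `2m/(N+1)` in `ℝ/ℤ`. With `t = ⌊|P|^{1/4}⌋`, `N = t²` and
`m = t + 1` this is at most `ε` once `t ≥ 4/ε`, and every piece has more than `|P|^{1/4}` terms.
-/

/-- Distance from a real number to the nearest integer, i.e. `‖x‖_{ℝ/ℤ}`. -/
noncomputable def distRZ (x : ℝ) : ℝ := |x - round x|

/-- `P` is a finite arithmetic progression in `ℤ`. -/
def IsAP (P : Finset ℤ) : Prop :=
  ∃ a d : ℤ, P = (Finset.range P.card).image (fun i : ℕ => a + (i : ℤ) * d)

/-- `Ps` is a partition of `P` into nonempty pieces. -/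
def IsPartitionOf (P : Finset ℤ) (Ps : Finset (Finset ℤ)) : Prop :=
  (∀ Q ∈ Ps, Q.Nonempty) ∧ (Ps : Set (Finset ℤ)).PairwiseDisjoint id ∧
    Ps.biUnion id = P

lemma distRZ_eq_norm (x : ℝ) : distRZ x = ‖(x : UnitAddCircle)‖ :=
  UnitAddCircle.norm_eq.symm

lemma distRZ_intCast_mul_le (k : ℤ) (x : ℝ) : distRZ (k * x) ≤ |(k : ℝ)| * distRZ x := by
  simpa [distRZ_eq_norm, ← zsmul_eq_mul, Int.norm_eq_abs] using norm_zsmul_le k (x : UnitAddCircle)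

def arithProg (a d : ℤ) (n : ℕ) : Finset ℤ :=
  (Finset.range n).image fun i : ℕ => a + i * d

section arithProg

variable {a d : ℤ} {n : ℕ}

lemma mem_arithProg {x : ℤ} : x ∈ arithProg a d n ↔ ∃ i < n, a + i * d = x := by
  simp [arithProg]

lemma card_arithProg (hd : d ≠ 0) : (arithProg a d n).card = n := by
  rw [arithProg, Finset.card_image_of_injective _ fun i j h => by simpa [hd] using h,
    Finset.card_range]

lemma isAP_arithProg (hd : d ≠ 0) : IsAP (arithProg a d n) :=
  ⟨a, d, by rw [card_arithProg hd]; rfl⟩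

lemma IsAP.exists_eq_arithProg {P : Finset ℤ} (hP : IsAP P) (h : 2 ≤ P.card) :
    ∃ a d, d ≠ 0 ∧ P = arithProg a d P.card := by
  obtain ⟨a, d, hP⟩ := hP
  refine ⟨a, d, fun hd => ?_, hP⟩
  have : P ⊆ {a} := fun x hx => by
    obtain ⟨i, -, rfl⟩ := Finset.mem_image.mp (hP ▸ hx)
    simp [hd]
  have := Finset.card_le_card this
  rw [Finset.card_singleton] at this
  omega

lemma arithProg_add (a d : ℤ) (m n : ℕ) :
    arithProg a d (m + n) = arithProg a d m ∪ arithProg (a + m * d) d n := by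
  ext x
  simp only [mem_arithProg, Finset.mem_union]
  constructor
  · rintro ⟨i, hi, rfl⟩
    by_cases him : i < m
    · exact Or.inl ⟨i, him, rfl⟩
    · refine Or.inr ⟨i - m, by omega, ?_⟩
      push_cast [Nat.cast_sub (not_lt.mp him)]
      ring
  · rintro (⟨i, hi, rfl⟩ | ⟨i, hi, rfl⟩)
    · exact ⟨i, by omega, rfl⟩
    · exact ⟨m + i, by omega, by push_cast; ring⟩

lemma disjoint_arithProg_add (hd : d ≠ 0) (m n : ℕ) :
    Disjoint (arithProg a d m) (arithProg (a + m * d) d n) := by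
  rw [← Finset.card_union_eq_card_add_card, ← arithProg_add, card_arithProg hd,
    card_arithProg hd, card_arithProg hd]

end arithProg

section IsPartitionOf

variable {P P' : Finset ℤ} {Ps Ps' : Finset (Finset ℤ)}

lemma IsPartitionOf.subset (hPs : IsPartitionOf P Ps) {Q : Finset ℤ} (hQ : Q ∈ Ps) : Q ⊆ P :=
  hPs.2.2 ▸ Finset.subset_biUnion_of_mem id hQ

lemma isPartitionOf_singleton (hP : P.Nonempty) : IsPartitionOf P {P} :=
  ⟨by simpa using hP, by simp, by simp⟩

lemma IsPartitionOf.union (hPs : IsPartitionOf P Ps) (hPs' : IsPartitionOf P' Ps')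
    (hPP' : Disjoint P P') : IsPartitionOf (P ∪ P') (Ps ∪ Ps') := by
  refine ⟨fun Q hQ => (Finset.mem_union.mp hQ).elim (hPs.1 Q) (hPs'.1 Q), ?_, ?_⟩
  · rw [Finset.coe_union]
    exact hPs.2.1.union hPs'.2.1 fun Q hQ Q' hQ' _ =>
      hPP'.mono (hPs.subset hQ) (hPs'.subset hQ')
  · rw [Finset.union_biUnion, hPs.2.2, hPs'.2.2]

lemma IsPartitionOf.exists_refine {p : Finset ℤ → Prop} (hPs : IsPartitionOf P Ps)
    (h : ∀ Q ∈ Ps, ∃ Rs, IsPartitionOf Q Rs ∧ ∀ R ∈ Rs, p R) :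
    ∃ Rs, IsPartitionOf P Rs ∧ ∀ R ∈ Rs, p R := by
  choose! Rs hRs hp using h
  refine ⟨Ps.biUnion Rs, ⟨?_, ?_, ?_⟩, ?_⟩
  · simp only [Finset.mem_biUnion]
    rintro R ⟨Q, hQ, hR⟩
    exact (hRs Q hQ).1 R hR
  · intro R hR R' hR' hRR'
    obtain ⟨Q, hQ, hR⟩ := Finset.mem_biUnion.mp hR
    obtain ⟨Q', hQ', hR'⟩ := Finset.mem_biUnion.mp hR'
    by_cases hQQ' : Q = Q'
    · subst hQQ'
      exact (hRs Q hQ).2.1 hR hR' hRR'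
    · exact (hPs.2.1 hQ hQ' hQQ').mono ((hRs Q hQ).subset hR) ((hRs Q' hQ').subset hR')
  · rw [Finset.biUnion_biUnion, ← hPs.2.2]
    exact Finset.biUnion_congr rfl fun Q hQ => (hRs Q hQ).2.2
  · simp only [Finset.mem_biUnion]
    rintro R ⟨Q, hQ, hR⟩
    exact hp Q hQ R hR

end IsPartitionOf

section Decomposition

variable {d : ℤ}

lemma lt_sub_ceilDiv_iff {q r s L : ℕ} (hq : 0 < q) : s < (L - r) ⌈/⌉ q ↔ r + q * s < L := by
  rw [← not_le, ceilDiv_le_iff_le_mul hq]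
  omega

lemma arithProg_nonempty {a : ℤ} {n : ℕ} (hn : 0 < n) : (arithProg a d n).Nonempty :=
  ⟨a, mem_arithProg.mpr ⟨0, hn, by simp⟩⟩

lemma exists_partition_arithProg_chunks (hd : d ≠ 0) {m : ℕ} (hm : 0 < m) {n : ℕ} (hmn : m ≤ n)
    (a : ℤ) : ∃ Ps, IsPartitionOf (arithProg a d n) Ps ∧
      ∀ Q ∈ Ps, ∃ b ℓ, Q = arithProg b d ℓ ∧ m ≤ ℓ ∧ ℓ < 2 * m := by
  induction n using Nat.strong_induction_on generalizing a with
  | _ n ih =>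
  by_cases hn : n < 2 * m
  · refine ⟨{arithProg a d n}, isPartitionOf_singleton (arithProg_nonempty (by omega)), ?_⟩
    simp only [Finset.mem_singleton, forall_eq]
    exact ⟨a, n, rfl, hmn, hn⟩
  · obtain ⟨Ps, hPs, hPs_ap⟩ := ih (n - m) (by omega) (by omega) (a + m * d)
    refine ⟨{arithProg a d m} ∪ Ps, ?_, ?_⟩
    · rw [show n = m + (n - m) by omega, arithProg_add]
      exact (isPartitionOf_singleton (arithProg_nonempty hm)).union hPs
        (disjoint_arithProg_add hd m _)
    · simp only [Finset.mem_union, Finset.mem_singleton]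
      rintro Q (rfl | hQ)
      · exact ⟨a, m, rfl, le_rfl, by omega⟩
      · exact hPs_ap Q hQ

lemma arithProg_eq_biUnion_residues (a d : ℤ) {q : ℕ} (hq : 0 < q) (L : ℕ) :
    arithProg a d L =
      (Finset.range q).biUnion fun r : ℕ => arithProg (a + r * d) (q * d) ((L - r) ⌈/⌉ q) := by
  ext x
  simp only [Finset.mem_biUnion, Finset.mem_range, mem_arithProg, lt_sub_ceilDiv_iff hq]
  constructor
  · rintro ⟨i, hi, rfl⟩
    refine ⟨i % q, Nat.mod_lt i hq, i / q, by rwa [Nat.mod_add_div], ?_⟩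
    conv_rhs => rw [← Nat.mod_add_div i q]
    push_cast
    ring
  · rintro ⟨r, -, s, hs, rfl⟩
    exact ⟨r + q * s, hs, by push_cast; ring⟩

lemma isPartitionOf_arithProg_residues (hd : d ≠ 0) {q L : ℕ} (hq : 0 < q) (hqL : q ≤ L)
    (a : ℤ) : IsPartitionOf (arithProg a d L)
      ((Finset.range q).image fun r : ℕ => arithProg (a + r * d) (q * d) ((L - r) ⌈/⌉ q)) := by
  refine ⟨?_, ?_, ?_⟩
  · simp only [Finset.mem_image, Finset.mem_range]
    rintro Q ⟨r, hr, rfl⟩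
    exact arithProg_nonempty ((lt_sub_ceilDiv_iff hq).mpr (by omega))
  · simp only [Finset.coe_image, Finset.coe_range]
    rintro _ ⟨r, hr, rfl⟩ _ ⟨r', hr', rfl⟩ hne
    refine Finset.disjoint_left.mpr fun x hx hx' => hne ?_
    obtain ⟨s, -, rfl⟩ := mem_arithProg.mp hx
    obtain ⟨s', -, hss'⟩ := mem_arithProg.mp hx'
    have hidx : r' + q * s' = r + q * s := by
      have : ((r' + q * s' : ℕ) : ℤ) * d = ((r + q * s : ℕ) : ℤ) * d := by
        push_cast; linarith
      exact_mod_cast mul_right_cancel₀ hd this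
    have := congrArg (· % q) hidx
    simp only [Nat.add_mul_mod_self_left, Nat.mod_eq_of_lt hr, Nat.mod_eq_of_lt hr'] at this
    rw [this]
  · rw [Finset.image_biUnion, arithProg_eq_biUnion_residues a d hq]
    rfl

lemma le_sub_ceilDiv_of_mul_le {q m L r : ℕ} (hq : 0 < q) (hr : r < q) (hqm : q * m ≤ L) :
    m ≤ (L - r) ⌈/⌉ q := by
  rcases m with _ | m
  · exact Nat.zero_le _
  · rw [Nat.mul_succ] at hqm
    exact (lt_sub_ceilDiv_iff hq).mpr (by omega)

lemma exists_partition_arithProg_step_mul (hd : d ≠ 0) {q m L : ℕ} (hq : 0 < q) (hm : 0 < m)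
    (hqm : q * m ≤ L) (a : ℤ) : ∃ Ps, IsPartitionOf (arithProg a d L) Ps ∧
      ∀ Q ∈ Ps, ∃ b ℓ, Q = arithProg b (q * d) ℓ ∧ m ≤ ℓ ∧ ℓ < 2 * m := by
  have hqd : (q : ℤ) * d ≠ 0 := mul_ne_zero (by exact_mod_cast hq.ne') hd
  refine (isPartitionOf_arithProg_residues hd hq (le_trans (Nat.le_mul_of_pos_right q hm) hqm)
    a).exists_refine ?_
  simp only [Finset.mem_image, Finset.mem_range]
  rintro Q ⟨r, hr, rfl⟩
  exact exists_partition_arithProg_chunks hqd hm (le_sub_ceilDiv_of_mul_le hq hr hqm) _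

end Decomposition

lemma distRZ_sub_le_of_mem_arithProg (α : ℝ) {b e n n' : ℤ} {ℓ : ℕ}
    (hn : n ∈ arithProg b e ℓ) (hn' : n' ∈ arithProg b e ℓ) :
    distRZ (α * n - α * n') ≤ ℓ * distRZ (α * e) := by
  obtain ⟨s, hs, rfl⟩ := mem_arithProg.mp hn
  obtain ⟨s', hs', rfl⟩ := mem_arithProg.mp hn'
  have hss' : |((s - s' : ℤ) : ℝ)| ≤ ℓ := by
    rw [abs_le]; push_cast
    constructor <;> linarith [(Nat.cast_lt (α := ℝ)).mpr hs, (Nat.cast_lt (α := ℝ)).mpr hs',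
      (Nat.cast_nonneg s : (0 : ℝ) ≤ s), (Nat.cast_nonneg s' : (0 : ℝ) ≤ s')]
  calc distRZ (α * ↑(b + s * e) - α * ↑(b + s' * e))
      = distRZ (((s - s' : ℤ) : ℝ) * (α * e)) := by push_cast; ring_nf
    _ ≤ |((s - s' : ℤ) : ℝ)| * distRZ (α * e) := distRZ_intCast_mul_le _ _
    _ ≤ ℓ * distRZ (α * e) := mul_le_mul_of_nonneg_right hss' (abs_nonneg _)

theorem exists_partition_arithProg_small_diam (α : ℝ) {a d : ℤ} (hd : d ≠ 0) {N m L : ℕ}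
    (hN : 0 < N) (hm : 0 < m) (hNm : N * m ≤ L) {ε : ℝ} (hε : 2 * m ≤ ε * (N + 1)) :
    ∃ Ps, IsPartitionOf (arithProg a d L) Ps ∧ ∀ Q ∈ Ps, IsAP Q ∧ m ≤ Q.card ∧
      ∀ n ∈ Q, ∀ n' ∈ Q, distRZ (α * n - α * n') ≤ ε := by
  obtain ⟨q, hq, hqN, hdist⟩ := Real.exists_nat_abs_mul_sub_round_le (α * d) hN
  have hqd : (q : ℤ) * d ≠ 0 := mul_ne_zero (by exact_mod_cast hq.ne') hd
  obtain ⟨Ps, hPs, hPs_ap⟩ := exists_partition_arithProg_step_mul hd hq hm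
    ((Nat.mul_le_mul_right m hqN).trans hNm) a
  refine ⟨Ps, hPs, fun Q hQ => ?_⟩
  obtain ⟨b, ℓ, rfl, hmℓ, hℓm⟩ := hPs_ap Q hQ
  refine ⟨isAP_arithProg hqd, (card_arithProg hqd).symm ▸ hmℓ, fun n hn n' hn' => ?_⟩
  have hN1 : (0 : ℝ) < N + 1 := by positivity
  calc distRZ (α * n - α * n') ≤ ℓ * distRZ (q * (α * d)) := by
        simpa only [Int.cast_mul, Int.cast_natCast, mul_left_comm α]
          using distRZ_sub_le_of_mem_arithProg α hn hn'
    _ ≤ (2 * m) * (1 / (N + 1)) := by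
        gcongr
        · exact abs_nonneg _
        · exact_mod_cast hℓm.le
        · exact hdist
    _ ≤ ε := by rw [mul_one_div, div_le_iff₀ hN1]; exact hε

lemma Nat.sqrt_sqrt_pow_four_le (L : ℕ) : L.sqrt.sqrt ^ 4 ≤ L :=
  calc L.sqrt.sqrt ^ 4 = (L.sqrt.sqrt ^ 2) ^ 2 := by ring
    _ ≤ L.sqrt ^ 2 := Nat.pow_le_pow_left (Nat.sqrt_le' _) 2
    _ ≤ L := Nat.sqrt_le' L

lemma Nat.lt_sqrt_sqrt_add_one_pow_four (L : ℕ) : L < (L.sqrt.sqrt + 1) ^ 4 :=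
  calc L < (L.sqrt + 1) ^ 2 := Nat.lt_succ_sqrt' L
    _ ≤ ((L.sqrt.sqrt + 1) ^ 2) ^ 2 := Nat.pow_le_pow_left (Nat.lt_succ_sqrt' _) 2
    _ = (L.sqrt.sqrt + 1) ^ 4 := by ring

lemma Nat.le_sqrt_sqrt {T L : ℕ} (h : T ^ 4 ≤ L) : T ≤ L.sqrt.sqrt :=
  Nat.lt_succ_iff.mp <| (Nat.pow_lt_pow_iff_left (by norm_num)).mp <|
    h.trans_lt (Nat.lt_sqrt_sqrt_add_one_pow_four L)

/-- A linear phase `n ↦ αn + β (mod 1)` is almost constant on subprogressions: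
for every `ε > 0` there is `κ > 0` such that every sufficiently long progression
`P` can be partitioned into progressions of size at least `|P|^κ` on each of
which the phase has diameter at most `ε` in `ℝ/ℤ`. -/
theorem linear_phase_almost_constant (α β : ℝ) (ε : ℝ) (hε : 0 < ε) :
    ∃ κ : ℝ, 0 < κ ∧ ∃ L0 : ℕ, ∀ P : Finset ℤ, IsAP P → L0 ≤ P.card →
      ∃ Ps : Finset (Finset ℤ), IsPartitionOf P Ps ∧
        ∀ Q ∈ Ps, IsAP Q ∧ (P.card : ℝ) ^ κ ≤ (Q.card : ℝ) ∧
          ∀ n ∈ Q, ∀ n' ∈ Q,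
            distRZ ((α * (n : ℝ) + β) - (α * (n' : ℝ) + β)) ≤ ε := by
  refine ⟨4⁻¹, by norm_num, (⌈4 / ε⌉₊ + 2) ^ 4, fun P hP hL => ?_⟩
  obtain ⟨t, ht_le, ht_lt, ht⟩ : ∃ t, t ^ 4 ≤ P.card ∧ P.card < (t + 1) ^ 4 ∧ ⌈4 / ε⌉₊ + 2 ≤ t :=
    ⟨_, Nat.sqrt_sqrt_pow_four_le _, Nat.lt_sqrt_sqrt_add_one_pow_four _, Nat.le_sqrt_sqrt hL⟩
  have hNm : t ^ 2 * (t + 1) ≤ P.card :=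
    calc t ^ 2 * (t + 1) ≤ t ^ 2 * t ^ 2 := Nat.mul_le_mul_left _ (by nlinarith)
      _ ≤ P.card := by rw [← pow_add]; exact ht_le
  obtain ⟨a, d, hd, hPad⟩ := hP.exists_eq_arithProg (le_trans (by nlinarith) hNm)
  have hεt : 2 * ((t + 1 : ℕ) : ℝ) ≤ ε * ((t ^ 2 : ℕ) + 1) := by
    have : 4 / ε ≤ t := (Nat.le_ceil _).trans (by exact_mod_cast (by omega : ⌈4 / ε⌉₊ ≤ t))
    rw [div_le_iff₀ hε] at this
    push_cast
    nlinarith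
  obtain ⟨Ps, hPs, hPs_ap⟩ := exists_partition_arithProg_small_diam α hd
    (pow_pos (by omega) 2) t.succ_pos hNm hεt
  refine ⟨Ps, hPad ▸ hPs, fun Q hQ => ?_⟩
  obtain ⟨hQ_ap, hQ_card, hQ_diam⟩ := hPs_ap Q hQ
  refine ⟨hQ_ap, ?_, fun n hn n' hn' => add_sub_add_right_eq_sub (α * n) (α * n') β ▸
    hQ_diam n hn n' hn'⟩
  rw [Real.rpow_inv_le_iff_of_pos (Nat.cast_nonneg _) (Nat.cast_nonneg _) four_pos]
  exact_mod_cast ht_lt.le.trans (Nat.pow_le_pow_left hQ_card 4)
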